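/- arXiv:1603.08298 — 5 statements merged into one kernel-verified Lean document; each statement's English description precedes it below -/
import Mathlib

section
/- For every k ≥ 1, the sweep-out sequence satisfies the recursive-sum identity s_A(k) = (1-μ(A))^k + μ(A)·∑_{j=0}^{k-1} (1-μ(A))^{k-1-j}·c_A(j). -/
open MeasureTheory Filter Topology

noncomputable def hitTime {X : Type*} (T : X → X) (A : Set X) (x : X) : ℕ∞ :=
  sInf ((↑) '' {k : ℕ | 1 ≤ k ∧ T^[k] x ∈ A})

noncomputable def sweep {X : Type*} [MeasurableSpace X] (μ : Measure X) (T : X → X)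
    (A : Set X) (k : ℕ) : ℝ :=
  (μ (⋂ i ∈ Finset.range k, T^[i] ⁻¹' Aᶜ)).toReal

/-!
Let `B k` be the set of points whose iterates `x, T x, …, T^[k-1] x` all miss `A`, so that
`s_A(k) = μ (B k)` and `{τ_A > k} = T⁻¹ (B k)`. Since `B (k+1) = Aᶜ ∩ T⁻¹ (B k)` and `T` preserves `μ`,
`s_A(k+1) = s_A(k) - μ (A ∩ {τ_A > k})`, and `μ (A ∩ {τ_A > k}) = μ(A) μ_A(τ_A > k)` rewrites this as
the linear recurrence `s_A(k+1) = (1 - μ(A)) s_A(k) + μ(A) c_A(k)`, which unrolls to the stated sum.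
-/

theorem eq_pow_mul_add_sum_of_succ {R : Type*} [CommSemiring R] {u b : ℕ → R} {r : R}
    (h : ∀ n, u (n + 1) = r * u n + b n) (n : ℕ) :
    u n = r ^ n * u 0 + ∑ j ∈ Finset.range n, r ^ (n - 1 - j) * b j := by
  induction n with
  | zero => simp
  | succ n ih =>
    have hpow : ∀ j ∈ Finset.range n, r ^ (n + 1 - 1 - j) * b j = r * (r ^ (n - 1 - j) * b j) := by
      intro j hj
      rw [← mul_assoc, ← pow_succ', show n + 1 - 1 - j = n - 1 - j + 1 by
        have := Finset.mem_range.mp hj; omega]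
    rw [h, ih, Finset.sum_range_succ, Finset.sum_congr rfl hpow, ← Finset.mul_sum,
      Nat.add_sub_cancel, Nat.sub_self, pow_zero, one_mul, pow_succ']
    ring

section Sweep
variable {X : Type*} (T : X → X) (A : Set X)

def avoidSet (k : ℕ) : Set X := ⋂ i ∈ Finset.range k, T^[i] ⁻¹' Aᶜ

theorem avoidSet_zero : avoidSet T A 0 = Set.univ := by simp [avoidSet]

theorem avoidSet_succ (k : ℕ) : avoidSet T A (k + 1) = Aᶜ ∩ T ⁻¹' avoidSet T A k := by
  ext x
  simp only [avoidSet, Set.mem_iInter, Finset.mem_range, Set.mem_inter_iff, Set.mem_preimage,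
    Nat.forall_lt_succ_left, Function.iterate_zero_apply, Function.iterate_succ_apply]

theorem setOf_lt_hitTime (k : ℕ) : {x | (k : ℕ∞) < hitTime T A x} = T ⁻¹' avoidSet T A k := by
  ext x
  simp only [Set.mem_ofPred_eq, hitTime, ← ENat.add_one_le_iff (ENat.natCast_ne_top k),
    le_sInf_iff, Set.forall_mem_image, avoidSet, Set.mem_preimage, Set.mem_iInter,
    Finset.mem_range, Set.mem_compl_iff, ← Function.iterate_succ_apply]
  norm_cast
  constructor
  · intro h i hi hiA
    have := h ⟨i.succ_pos, hiA⟩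
    omega
  · rintro h (_ | i) ⟨hi, hiA⟩
    · omega
    · by_contra hik
      exact h i (by omega) hiA

variable [MeasurableSpace X] {μ : Measure X} {T A}

theorem sweep_eq_measure_avoidSet (k : ℕ) : sweep μ T A k = (μ (avoidSet T A k)).toReal := rfl

theorem sweep_zero [IsProbabilityMeasure μ] : sweep μ T A 0 = 1 := by
  simp [sweep_eq_measure_avoidSet, avoidSet_zero]

theorem measurableSet_avoidSet (hT : Measurable T) (hA : MeasurableSet A) (k : ℕ) :
    MeasurableSet (avoidSet T A k) :=
  .biInter (Finset.range k).countable_toSet fun i _ => hA.compl.preimage (hT.iterate i)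

theorem measure_avoidSet_eq_add (hT : MeasurePreserving T μ μ) (hA : MeasurableSet A) (k : ℕ) :
    μ (avoidSet T A k) = μ (A ∩ {x | (k : ℕ∞) < hitTime T A x}) + μ (avoidSet T A (k + 1)) := by
  rw [setOf_lt_hitTime, avoidSet_succ, Set.inter_comm A, Set.inter_comm Aᶜ, ← Set.sdiff_eq,
    measure_inter_add_sdiff _ hA,
    hT.measure_preimage (measurableSet_avoidSet hT.measurable hA k).nullMeasurableSet]

theorem sweep_succ [IsFiniteMeasure μ] (hT : MeasurePreserving T μ μ) (hA : MeasurableSet A)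
    (k : ℕ) :
    sweep μ T A (k + 1) = (1 - (μ A).toReal) * sweep μ T A k + (μ A).toReal *
      ((μ {x | (k : ℕ∞) < hitTime T A x}).toReal -
        ((ProbabilityTheory.cond μ A) {x | (k : ℕ∞) < hitTime T A x}).toReal) := by
  have hS : μ {x | (k : ℕ∞) < hitTime T A x} = μ (avoidSet T A k) := by
    rw [setOf_lt_hitTime,
      hT.measure_preimage (measurableSet_avoidSet hT.measurable hA k).nullMeasurableSet]
  have hcond : (μ A).toReal * ((ProbabilityTheory.cond μ A) {x | (k : ℕ∞) < hitTime T A x}).toReal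
      = (μ (A ∩ {x | (k : ℕ∞) < hitTime T A x})).toReal := by
    rw [← ENNReal.toReal_mul, mul_comm, ProbabilityTheory.cond_mul_eq_inter hA]
  have hsplit := congrArg ENNReal.toReal (measure_avoidSet_eq_add hT hA k)
  rw [ENNReal.toReal_add (measure_ne_top _ _) (measure_ne_top _ _)] at hsplit
  rw [sweep_eq_measure_avoidSet, sweep_eq_measure_avoidSet, hS]
  linear_combination hcond - hsplit

end Sweep

theorem sweep_recursive_sum_general {X : Type*} [MeasurableSpace X] (μ : Measure X)
    [IsProbabilityMeasure μ] (T : X → X) (hT : MeasurePreserving T μ μ)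
    (A : Set X) (hA : MeasurableSet A)
    (c : ℕ → ℝ)
    (hc : ∀ j : ℕ, c j = (μ {x | (j : ℕ∞) < hitTime T A x}).toReal -
      ((ProbabilityTheory.cond μ A) {x | (j : ℕ∞) < hitTime T A x}).toReal)
    (k : ℕ) :
    sweep μ T A k = (1 - (μ A).toReal) ^ k +
      (μ A).toReal * ∑ j ∈ Finset.range k, (1 - (μ A).toReal) ^ (k - 1 - j) * c j := by
  rw [eq_pow_mul_add_sum_of_succ (sweep_succ hT hA) k, sweep_zero, mul_one, Finset.mul_sum]
  congr 1
  refine Finset.sum_congr rfl fun j _ => ?_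
  rw [hc]
  ring

theorem sweep_recursive_sum {X : Type*} [MeasurableSpace X] (μ : Measure X)
    [IsProbabilityMeasure μ] (T : X → X) (hT : MeasurePreserving T μ μ)
    (hE : Ergodic T μ) (A : Set X) (hA : MeasurableSet A) (hpos : 0 < μ A)
    (c : ℕ → ℝ)
    (hc : ∀ j : ℕ, c j = (μ {x | (j : ℕ∞) < hitTime T A x}).toReal -
      ((ProbabilityTheory.cond μ A) {x | (j : ℕ∞) < hitTime T A x}).toReal)
    (k : ℕ) (hk : 1 ≤ k) :
    sweep μ T A k = (1 - (μ A).toReal) ^ k +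
      (μ A).toReal * ∑ j ∈ Finset.range k, (1 - (μ A).toReal) ^ (k - 1 - j) * c j :=
  sweep_recursive_sum_general μ T hT A hA c hc k
end

section
/- For every t > 0, the Laplace transform of the normalized hitting time satisfies φ_{A,X}(t) := ∫_X e^{-μ(A)·τ_A·t} dμ = 1 - (1 - e^{-μ(A)t})·∑_{k=0}^∞ e^{-μ(A)kt}·s_A(k). -/
/-!
With `c = exp (-μ(A) t) ∈ (0, 1)` the integrand is `c ^ τ_A`, and for a finite hitting time `n`
the geometric sum gives `c ^ n = 1 - (1 - c) ∑_{k < n} c ^ k`, where `k < n` holds exactly on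
the tail set `{τ_A > k}`. Integrating termwise yields
`∫ c ^ τ_A = 1 - (1 - c) ∑ c ^ k μ(τ_A > k)`.
Since `{τ_A > k}` is the preimage under `T` of the set counted by `s_A(k)` (no visit at times
`0, …, k - 1`), invariance of `μ` gives `μ(τ_A > k) = s_A(k)`. Ergodicity makes `τ_A` finite
almost everywhere, so the junk value `(⊤ : ℕ∞).toNat = 0` does not affect the integral.
-/

open MeasureTheory Filter Topology

theorem tsum_ite_lt_mul_pow {R : Type*} [Ring R] [TopologicalSpace R] (c : R) (n : ℕ) :
    ∑' k : ℕ, (if k < n then (1 - c) * c ^ k else 0) = 1 - c ^ n := by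
  rw [tsum_eq_sum (s := Finset.range n) fun k hk => if_neg (by simpa using hk),
    Finset.sum_ite_of_true fun k hk => Finset.mem_range.mp hk, ← Finset.mul_sum,
    mul_neg_geom_sum]

theorem ENat.measurable_of_measurableSet_coe_lt {α : Type*} [MeasurableSpace α]
    {f : α → ℕ∞} (h : ∀ k : ℕ, MeasurableSet {x | (k : ℕ∞) < f x}) :
    Measurable f := by
  refine ENat.measurable_iff.2 fun n => ?_
  cases n with
  | zero =>
    convert (h 0).compl using 1
    ext x
    simp
  | succ m =>
    convert (h m).diff (h (m + 1)) using 1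
    ext x
    simp only [Set.mem_preimage, Set.mem_singleton_iff, Set.mem_sdiff, Set.mem_ofPred_eq, not_lt,
      ← ENat.add_one_le_iff (ENat.natCast_ne_top m)]
    push_cast
    exact le_antisymm_iff.trans and_comm

theorem integral_pow_toNat_eq_one_sub_mul_tsum {X : Type*} [MeasurableSpace X] {μ : Measure X}
    [IsProbabilityMeasure μ] {τ : X → ℕ∞} (hτ : Measurable τ)
    (hfin : ∀ᵐ x ∂μ, τ x ≠ ⊤) {c : ℝ} (hc₀ : 0 ≤ c) (hc₁ : c < 1) :
    ∫ x, c ^ (τ x).toNat ∂μ =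
      1 - (1 - c) * ∑' k : ℕ, c ^ k * μ.real {x | (k : ℕ∞) < τ x} := by
  set S : ℕ → Set X := fun k => {x | (k : ℕ∞) < τ x}
  have hS : ∀ k, MeasurableSet (S k) := fun k => hτ (.of_discrete (s := Set.Ioi (k : ℕ∞)))
  set F : ℕ → X → ℝ := fun k => (S k).indicator fun _ => (1 - c) * c ^ k
  have hF : ∀ᵐ x ∂μ, 1 - c ^ (τ x).toNat = ∑' k, F k x := by
    filter_upwards [hfin] with x hx
    lift τ x to ℕ using hx with n hn
    rw [ENat.toNat_natCast, ← tsum_ite_lt_mul_pow]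
    refine tsum_congr fun k => ?_
    simp [F, S, Set.indicator, ← hn]
  have hF_integral : ∀ k, ∫ x, F k x ∂μ = (1 - c) * (c ^ k * μ.real (S k)) := fun k => by
    rw [integral_indicator_const _ (hS k), smul_eq_mul]
    ring
  have hF_summable : Summable fun k => ∫ x, ‖F k x‖ ∂μ := by
    have hF_nonneg (k : ℕ) : 0 ≤ (1 - c) * c ^ k :=
      mul_nonneg (sub_nonneg.2 hc₁.le) (pow_nonneg hc₀ k)
    refine Summable.of_nonneg_of_le (fun k => integral_nonneg fun x => norm_nonneg _)
      (fun k => ?_) ((summable_geometric_of_lt_one hc₀ hc₁).mul_left (1 - c))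
    simp_rw [F, norm_indicator_eq_indicator_norm, Real.norm_of_nonneg (hF_nonneg _)]
    rw [integral_indicator_const _ (hS k), smul_eq_mul]
    exact mul_le_of_le_one_left (hF_nonneg k) measureReal_le_one
  have hint : Integrable (fun x => c ^ (τ x).toNat) μ := by
    have hmeas : Measurable fun x => c ^ (τ x).toNat :=
      (Measurable.of_discrete (f := fun n : ℕ∞ => c ^ n.toNat)).comp hτ
    refine .of_bound hmeas.aestronglyMeasurable 1 (Eventually.of_forall fun x => ?_)
    rw [Real.norm_of_nonneg (by positivity)]
    exact pow_le_one₀ hc₀ hc₁.le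
  have hone_sub : ∫ x, (1 - c ^ (τ x).toNat) ∂μ = (1 - c) * ∑' k, c ^ k * μ.real (S k) := by
    rw [integral_congr_ae hF, ← integral_tsum_of_summable_integral_norm
      (fun k => (integrable_const _).indicator (hS k)) hF_summable, ← tsum_mul_left]
    exact tsum_congr hF_integral
  rw [integral_sub (integrable_const 1) hint, integral_const, probReal_univ, one_smul] at hone_sub
  linarith

section HittingTime

variable {X : Type*} {T : X → X} {A : Set X}

theorem coe_lt_hitTime_iff {x : X} {k : ℕ} :
    (k : ℕ∞) < hitTime T A x ↔ ∀ i < k, T^[i + 1] x ∉ A := by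
  rw [← ENat.add_one_le_iff (ENat.natCast_ne_top k), hitTime, le_sInf_iff, Set.forall_mem_image]
  norm_cast
  refine ⟨fun h i hi hiA => ?_, fun h m ⟨hm, hmA⟩ => ?_⟩
  · have := h ⟨i.succ_pos, hiA⟩
    omega
  · by_contra! hmk
    exact h (m - 1) (by omega) (by rwa [Nat.sub_add_cancel hm])

theorem setOf_coe_lt_hitTime (k : ℕ) :
    {x | (k : ℕ∞) < hitTime T A x} = T ⁻¹' ⋂ i ∈ Finset.range k, T^[i] ⁻¹' Aᶜ := by
  ext x
  simp [coe_lt_hitTime_iff, Function.iterate_succ_apply]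

theorem hitTime_le_of_iterate_mem {x : X} {k : ℕ} (hk : 1 ≤ k) (hkA : T^[k] x ∈ A) :
    hitTime T A x ≤ k :=
  sInf_le ⟨k, ⟨hk, hkA⟩, rfl⟩

variable [MeasurableSpace X]

theorem measurable_hitTime (hT : Measurable T) (hA : MeasurableSet A) :
    Measurable (hitTime T A) :=
  ENat.measurable_of_measurableSet_coe_lt fun k => by
    rw [setOf_coe_lt_hitTime]
    exact hT (Finset.measurableSet_biInter _ fun i _ => hA.compl.preimage (hT.iterate i))

theorem sweep_eq_measureReal_coe_lt_hitTime {μ : Measure X} (hT : MeasurePreserving T μ μ)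
    (hA : MeasurableSet A) (k : ℕ) :
    sweep μ T A k = μ.real {x | (k : ℕ∞) < hitTime T A x} := by
  have hmeas : MeasurableSet (⋂ i ∈ Finset.range k, T^[i] ⁻¹' Aᶜ) :=
    Finset.measurableSet_biInter _ fun i _ => hA.compl.preimage (hT.measurable.iterate i)
  rw [setOf_coe_lt_hitTime, measureReal_def, hT.measure_preimage hmeas.nullMeasurableSet, sweep]

theorem Ergodic.ae_exists_iterate_succ_mem {μ : Measure X} [IsFiniteMeasure μ]
    (hT : Ergodic T μ) (hA : MeasurableSet A) (hA₀ : μ A ≠ 0) :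
    ∀ᵐ x ∂μ, ∃ k, T^[k + 1] x ∈ A := by
  set B := ⋃ k, T^[k + 1] ⁻¹' A
  have hB : MeasurableSet B := .iUnion fun k => hA.preimage (hT.measurable.iterate _)
  have hTB : T ⁻¹' B ⊆ B := by
    simp only [B, Set.preimage_iUnion, ← Set.preimage_comp, ← Function.iterate_succ]
    exact Set.iUnion_subset fun k => Set.subset_iUnion_of_subset (k + 1) le_rfl
  rcases hT.ae_empty_or_univ_of_preimage_ae_le hB.nullMeasurableSet hTB.eventuallyLE with h | h
  · have hA₁ : μ (T^[0 + 1] ⁻¹' A) = 0 :=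
      measure_mono_null (Set.subset_iUnion (fun k => T^[k + 1] ⁻¹' A) 0)
        ((measure_congr h).trans measure_empty)
    rw [(hT.toMeasurePreserving.iterate _).measure_preimage hA.nullMeasurableSet] at hA₁
    exact absurd hA₁ hA₀
  · filter_upwards [h] with x hx
    have hxB : x ∈ B := hx.mpr trivial
    simpa [B] using hxB

theorem ae_hitTime_ne_top {μ : Measure X} [IsFiniteMeasure μ] (hT : Ergodic T μ)
    (hA : MeasurableSet A) (hA₀ : μ A ≠ 0) : ∀ᵐ x ∂μ, hitTime T A x ≠ ⊤ := by
  filter_upwards [hT.ae_exists_iterate_succ_mem hA hA₀] with x ⟨k, hk⟩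
  exact ne_top_of_le_ne_top (ENat.natCast_ne_top _) (hitTime_le_of_iterate_mem k.succ_pos hk)

end HittingTime

theorem laplace_hitting_time {X : Type*} [MeasurableSpace X] (μ : Measure X)
    [IsProbabilityMeasure μ] (T : X → X) (hE : Ergodic T μ)
    (A : Set X) (hA : MeasurableSet A) (hpos : 0 < μ A) (t : ℝ) (ht : 0 < t) :
    ∫ x, Real.exp (-((μ A).toReal * ((hitTime T A x).toNat : ℝ) * t)) ∂μ =
      1 - (1 - Real.exp (-((μ A).toReal * t))) *
        ∑' k : ℕ, Real.exp (-((μ A).toReal * k * t)) * sweep μ T A k := by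
  have hexp (n : ℕ) :
      Real.exp (-((μ A).toReal * n * t)) = Real.exp (-((μ A).toReal * t)) ^ n := by
    rw [← Real.exp_nat_mul]
    ring_nf
  have hμA : 0 < (μ A).toReal := ENNReal.toReal_pos hpos.ne' (measure_ne_top _ _)
  have hc₁ : Real.exp (-((μ A).toReal * t)) < 1 :=
    Real.exp_lt_one_iff.2 <| neg_neg_of_pos <| mul_pos hμA ht
  simp only [hexp, sweep_eq_measureReal_coe_lt_hitTime hE.toMeasurePreserving hA]
  exact integral_pow_toNat_eq_one_sub_mul_tsum (measurable_hitTime hE.measurable hA)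
    (ae_hitTime_ne_top hE hA hpos.ne') (Real.exp_pos _).le hc₁
end

section
/- Let A_n be sets of positive measure with μ(A_n) → 0. Then the distributions of μ(A_n)·τ_{A_n} on (A_n, μ_{A_n}) converge weakly to the exponential distribution with parameter 1 if and only if the distributions of μ(A_n)·τ_{A_n} on (X, μ) converge weakly to the exponential distribution with parameter 1. -/
open MeasureTheory Filter Topology

/-!
Write `φ k = μ (τ > k)` and `ψ k = μ_A (τ > k)`. Since `T⁻¹ {τ > k}` is the disjoint union of
`{τ > k + 1}` and `T⁻¹ (A ∩ {τ > k})` and `T` preserves `μ`, we get `φ k - φ (k + 1) = μ(A) ψ k`.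
As `ψ` is decreasing, with `a = μ(A)` the difference `φ ⌊s / a⌋ - φ ⌊t / a⌋` lies between
`(t - s) ψ ⌊t / a⌋` and `(t - s) ψ ⌊s / a⌋`, up to rounding. As `a → 0`, an exponential limit
for `ψ` therefore integrates (Riemann sums) to one for `φ`, and an exponential limit for `φ`
differentiates to one for `ψ`. Ergodicity and Poincaré recurrence make `τ` finite almost
everywhere, so the junk value `ENat.toNat ⊤ = 0` in the statement does not matter.
-/

open Finset Real

lemma exp_neg_sub_exp_neg_le (y h : ℝ) : exp (-y) - exp (-(y + h)) ≤ h * exp (-y) := by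
  have h1 : exp (-(y + h)) = exp (-y) * exp (-h) := by rw [← exp_add]; ring_nf
  rw [h1]
  nlinarith [add_one_le_exp (-h), exp_pos (-y)]

lemma mul_exp_neg_le_exp_neg_sub (y h : ℝ) : h * exp (-(y + h)) ≤ exp (-y) - exp (-(y + h)) := by
  have h1 : exp (-y) = exp (-(y + h)) * exp h := by rw [← exp_add]; ring_nf
  rw [h1]
  nlinarith [add_one_le_exp h, exp_pos (-(y + h))]

lemma exp_neg_mul_sub_le_sum (s h : ℝ) (M : ℕ) :
    exp (-h) * (exp (-s) - exp (-(s + M * h))) ≤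
      ∑ i ∈ range M, h * exp (-(s + (i + 1) * h)) := by
  have htel := sum_range_sub' (fun i : ℕ => exp (-(s + i * h))) M
  simp only [Nat.cast_zero, zero_mul, add_zero, Nat.cast_succ] at htel
  rw [← htel, mul_sum]
  refine sum_le_sum fun i _ => ?_
  have hshift : exp (-h) * exp (-(s + i * h)) = exp (-(s + (i + 1) * h)) := by
    rw [← exp_add]; ring_nf
  have hstep := exp_neg_sub_exp_neg_le (s + i * h) h
  rw [show s + i * h + h = s + (i + 1) * h by ring] at hstep
  calc exp (-h) * (exp (-(s + i * h)) - exp (-(s + (i + 1) * h)))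
      ≤ exp (-h) * (h * exp (-(s + i * h))) := by gcongr
    _ = h * exp (-(s + (i + 1) * h)) := by rw [← hshift]; ring

lemma tendsto_mul_natFloor_div {a : ℕ → ℝ} (ha : ∀ n, 0 < a n) (ha0 : Tendsto a atTop (𝓝 0))
    {t : ℝ} (ht : 0 ≤ t) : Tendsto (fun n => a n * ⌊t / a n⌋₊) atTop (𝓝 t) := by
  have hinv : Tendsto (fun n => (a n)⁻¹) atTop atTop :=
    tendsto_inv_nhdsGT_zero.comp
      (tendsto_nhdsWithin_of_tendsto_nhds_of_eventually_within _ ha0 (.of_forall ha))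
  refine ((tendsto_nat_floor_mul_div_atTop ht).comp hinv).congr fun n => ?_
  simp [div_eq_mul_inv, mul_comm]

/-- `F n t` and `G n t` stand for `μ (a n * τ > t)` and `μ_A (a n * τ > t)`, and `D n s t` for the
length of `[s, t]` rounded to the grid `a n • ℕ`. -/
structure TailSandwich (F G : ℕ → ℝ → ℝ) (D : ℕ → ℝ → ℝ → ℝ) : Prop where
  tendsto_gap : ∀ s t, 0 ≤ s → s ≤ t → Tendsto (fun n => D n s t) atTop (𝓝 (t - s))
  gap_mul_le : ∀ n s t, s ≤ t → D n s t * G n t ≤ F n s - F n t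
  le_gap_mul : ∀ n s t, s ≤ t → F n s - F n t ≤ D n s t * G n s

namespace TailSandwich

variable {F G : ℕ → ℝ → ℝ} {D : ℕ → ℝ → ℝ → ℝ}

lemma sum_gap_mul_le (h : TailSandwich F G D) (n : ℕ) (s : ℝ) {δ : ℝ} (hδ : 0 ≤ δ) (M : ℕ) :
    ∑ i ∈ range M, D n (s + i * δ) (s + (i + 1) * δ) * G n (s + (i + 1) * δ) ≤
      F n s - F n (s + M * δ) := by
  have htel := sum_range_sub' (fun i : ℕ => F n (s + i * δ)) M
  simp only [Nat.cast_zero, zero_mul, add_zero, Nat.cast_succ] at htel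
  rw [← htel]
  exact sum_le_sum fun i _ => h.gap_mul_le n _ _ (by nlinarith)

lemma eventually_lt_F_sub (h : TailSandwich F G D)
    (hG : ∀ t, 0 < t → Tendsto (fun n => G n t) atTop (𝓝 (exp (-t))))
    {s x b : ℝ} (hs : 0 ≤ s) (hx : 0 < x) (hb : b < exp (-s) - exp (-(s + x))) :
    ∀ᶠ n in atTop, b < F n s - F n (s + x) := by
  obtain ⟨M, hbM, hM⟩ : ∃ M : ℕ, b < exp (-(x / M)) * (exp (-s) - exp (-(s + x))) ∧ 0 < M := by
    have hlim : Tendsto (fun M : ℕ => exp (-(x / M)) * (exp (-s) - exp (-(s + x)))) atTop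
        (𝓝 (exp (-s) - exp (-(s + x)))) := by
      have := ((continuous_exp.comp continuous_neg).tendsto 0).comp
        (tendsto_const_div_atTop_nhds_zero_nat x)
      simpa using this.mul_const (exp (-s) - exp (-(s + x)))
    exact ((hlim.eventually (eventually_gt_nhds hb)).and (eventually_gt_atTop 0)).exists
  set δ := x / M with hδ
  have hMδ : (M : ℝ) * δ = x := by rw [hδ]; field_simp
  have hlim : Tendsto
      (fun n => ∑ i ∈ range M, D n (s + i * δ) (s + (i + 1) * δ) * G n (s + (i + 1) * δ))
      atTop (𝓝 (∑ i ∈ range M, δ * exp (-(s + (i + 1) * δ)))) := by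
    refine tendsto_finsetSum _ fun i _ => ?_
    have hgap := h.tendsto_gap (s + i * δ) (s + (i + 1) * δ) (by positivity) (by nlinarith)
    rw [show s + (i + 1) * δ - (s + i * δ) = δ by ring] at hgap
    exact hgap.mul (hG _ (by positivity))
  have hR := exp_neg_mul_sub_le_sum s δ M
  rw [hMδ] at hR
  filter_upwards [hlim.eventually (eventually_gt_nhds (hbM.trans_le hR))] with n hn
  simpa only [hMδ] using hn.trans_le (h.sum_gap_mul_le n s (by positivity) M)

lemma eventually_lt_G (h : TailSandwich F G D)
    (hF : ∀ t, 0 < t → Tendsto (fun n => F n t) atTop (𝓝 (exp (-t))))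
    {t x b : ℝ} (ht : 0 < t) (hx : 0 < x) (hb : b < exp (-(t + x))) :
    ∀ᶠ n in atTop, b < G n t := by
  have hgap := h.tendsto_gap t (t + x) ht.le (by linarith)
  rw [add_sub_cancel_left] at hgap
  have hbx : b * x < exp (-t) - exp (-(t + x)) := by
    nlinarith [mul_exp_neg_le_exp_neg_sub t x]
  filter_upwards [(tendsto_const_nhds.mul hgap).eventually_lt
      ((hF t ht).sub (hF (t + x) (by linarith))) hbx,
    hgap.eventually (eventually_gt_nhds hx)] with n hlt hpos
  have := hlt.trans_le (h.le_gap_mul n t (t + x) (by linarith))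
  rw [mul_comm] at this
  exact lt_of_mul_lt_mul_left this hpos.le

lemma eventually_G_lt (h : TailSandwich F G D)
    (hF : ∀ t, 0 < t → Tendsto (fun n => F n t) atTop (𝓝 (exp (-t))))
    {t x c : ℝ} (hx : 0 < x) (hxt : x < t) (hc : exp (-(t - x)) < c) :
    ∀ᶠ n in atTop, G n t < c := by
  have hgap := h.tendsto_gap (t - x) t (by linarith) (by linarith)
  rw [sub_sub_cancel] at hgap
  have hcx : exp (-(t - x)) - exp (-t) < c * x := by
    have := exp_neg_sub_exp_neg_le (t - x) x
    rw [sub_add_cancel] at this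
    nlinarith
  filter_upwards [((hF (t - x) (by linarith)).sub (hF t (by linarith))).eventually_lt
      (tendsto_const_nhds.mul hgap) hcx,
    hgap.eventually (eventually_gt_nhds hx)] with n hlt hpos
  have := (h.gap_mul_le n (t - x) t (by linarith)).trans_lt hlt
  rw [mul_comm c] at this
  exact lt_of_mul_lt_mul_left this hpos.le

theorem tendsto_F_of_tendsto_G (h : TailSandwich F G D) (hF0 : ∀ n, F n 0 = 1)
    (hF_nonneg : ∀ n t, 0 ≤ F n t)
    (hG : ∀ t, 0 < t → Tendsto (fun n => G n t) atTop (𝓝 (exp (-t)))) {t : ℝ} (ht : 0 < t) :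
    Tendsto (fun n => F n t) atTop (𝓝 (exp (-t))) := by
  refine tendsto_order.2 ⟨fun b hb => ?_, fun c hc => ?_⟩
  · obtain ⟨x, hbx, hx⟩ : ∃ x, b < exp (-t) - exp (-(t + x)) ∧ 0 < x := by
      have hlim : Tendsto (fun x => exp (-t) - exp (-(t + x))) atTop (𝓝 (exp (-t))) := by
        simpa using tendsto_const_nhds.sub (tendsto_exp_neg_atTop_nhds_zero.comp
          (tendsto_atTop_add_const_left atTop t tendsto_id))
      exact ((hlim.eventually (eventually_gt_nhds hb)).and (eventually_gt_atTop 0)).exists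
    filter_upwards [h.eventually_lt_F_sub hG ht.le hx hbx] with n hn
    linarith [hF_nonneg n (t + x)]
  · have hb : 1 - c < exp (-0) - exp (-(0 + t)) := by simp; linarith
    filter_upwards [h.eventually_lt_F_sub hG le_rfl ht hb] with n hn
    rw [hF0, zero_add] at hn
    linarith

theorem tendsto_G_of_tendsto_F (h : TailSandwich F G D)
    (hF : ∀ t, 0 < t → Tendsto (fun n => F n t) atTop (𝓝 (exp (-t)))) {t : ℝ} (ht : 0 < t) :
    Tendsto (fun n => G n t) atTop (𝓝 (exp (-t))) := by
  refine tendsto_order.2 ⟨fun b hb => ?_, fun c hc => ?_⟩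
  · have hcont : Tendsto (fun x => exp (-(t + x))) (𝓝[>] 0) (𝓝 (exp (-t))) :=
      ((by fun_prop : Continuous fun x => exp (-(t + x))).tendsto' 0 _ (by simp)).mono_left
        nhdsWithin_le_nhds
    obtain ⟨x, hbx, hx⟩ :=
      ((hcont.eventually (eventually_gt_nhds hb)).and self_mem_nhdsWithin).exists
    exact h.eventually_lt_G hF ht hx hbx
  · have hcont : Tendsto (fun x => exp (-(t - x))) (𝓝[>] 0) (𝓝 (exp (-t))) :=
      ((by fun_prop : Continuous fun x => exp (-(t - x))).tendsto' 0 _ (by simp)).mono_left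
        nhdsWithin_le_nhds
    obtain ⟨x, ⟨hcx, hxt⟩, hx⟩ := ((hcont.eventually (eventually_lt_nhds hc)).and
      (eventually_nhdsWithin_of_eventually_nhds (eventually_lt_nhds ht))).and
      self_mem_nhdsWithin |>.exists
    exact h.eventually_G_lt hF hx hxt hcx

theorem tendsto_exp_iff (h : TailSandwich F G D) (hF0 : ∀ n, F n 0 = 1)
    (hF_nonneg : ∀ n t, 0 ≤ F n t) :
    (∀ t, 0 < t → Tendsto (fun n => G n t) atTop (𝓝 (exp (-t)))) ↔
      (∀ t, 0 < t → Tendsto (fun n => F n t) atTop (𝓝 (exp (-t)))) :=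
  ⟨fun hG _ ht => h.tendsto_F_of_tendsto_G hF0 hF_nonneg hG ht,
    fun hF _ ht => h.tendsto_G_of_tendsto_F hF ht⟩

end TailSandwich

section Telescoping

variable {φ ψ : ℕ → ℝ} {c : ℝ}

lemma sub_eq_mul_sum_Ico (hrec : ∀ k, φ k - φ (k + 1) = c * ψ k) {k l : ℕ} (hkl : k ≤ l) :
    φ k - φ l = c * ∑ j ∈ Ico k l, ψ j := by
  simp only [mul_sum, ← hrec]
  rw [← neg_sub, ← sum_Ico_sub φ hkl, ← sum_neg_distrib]
  simp

lemma mul_sub_mul_le_sub (hψ : Antitone ψ) (hc : 0 ≤ c) (hrec : ∀ k, φ k - φ (k + 1) = c * ψ k)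
    {k l : ℕ} (hkl : k ≤ l) : c * ((l : ℝ) - k) * ψ l ≤ φ k - φ l := by
  rw [sub_eq_mul_sum_Ico hrec hkl, mul_assoc, ← Nat.cast_sub hkl, ← Nat.card_Ico, ← nsmul_eq_mul]
  exact mul_le_mul_of_nonneg_left
    (card_nsmul_le_sum _ _ _ fun j hj => hψ (mem_Ico.1 hj).2.le) hc

lemma sub_le_mul_sub_mul (hψ : Antitone ψ) (hc : 0 ≤ c) (hrec : ∀ k, φ k - φ (k + 1) = c * ψ k)
    {k l : ℕ} (hkl : k ≤ l) : φ k - φ l ≤ c * ((l : ℝ) - k) * ψ k := by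
  rw [sub_eq_mul_sum_Ico hrec hkl, mul_assoc, ← Nat.cast_sub hkl, ← Nat.card_Ico, ← nsmul_eq_mul]
  exact mul_le_mul_of_nonneg_left
    (sum_le_card_nsmul _ _ _ fun j hj => hψ (mem_Ico.1 hj).1) hc

end Telescoping

theorem TailSandwich.of_natFloor {a : ℕ → ℝ} {φ ψ : ℕ → ℕ → ℝ} (ha : ∀ n, 0 < a n)
    (ha0 : Tendsto a atTop (𝓝 0)) (hψ : ∀ n, Antitone (ψ n))
    (hrec : ∀ n k, φ n k - φ n (k + 1) = a n * ψ n k) :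
    TailSandwich (fun n t => φ n ⌊t / a n⌋₊) (fun n t => ψ n ⌊t / a n⌋₊)
      (fun n s t => a n * ((⌊t / a n⌋₊ : ℝ) - ⌊s / a n⌋₊)) where
  tendsto_gap s t hs hst := by
    simp only [mul_sub]
    exact (tendsto_mul_natFloor_div ha ha0 (hs.trans hst)).sub (tendsto_mul_natFloor_div ha ha0 hs)
  gap_mul_le n s t hst := mul_sub_mul_le_sub (hψ n) (ha n).le (hrec n)
    (Nat.floor_le_floor (div_le_div_of_nonneg_right hst (ha n).le))
  le_gap_mul n s t hst := sub_le_mul_sub_mul (hψ n) (ha n).le (hrec n)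
    (Nat.floor_le_floor (div_le_div_of_nonneg_right hst (ha n).le))

section HitTime

variable {X : Type*} {T : X → X} {A : Set X} {x : X}

lemma lt_hitTime_iff {k : ℕ} : (k : ℕ∞) < hitTime T A x ↔ ∀ i, 1 ≤ i → i ≤ k → T^[i] x ∉ A := by
  rw [← ENat.add_one_le_iff (ENat.natCast_ne_top k), hitTime, le_sInf_iff]
  simp only [Set.mem_image, Set.mem_ofPred_eq, forall_exists_index, and_imp]
  refine ⟨fun h i hi hik hiA => ?_, fun h _ i hi hiA hb => ?_⟩
  · have := h _ i hi hiA rfl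
    norm_cast at this
    omega
  · subst hb
    norm_cast
    by_contra hlt
    exact h i hi (by omega) hiA

lemma hitTime_pos : 0 < hitTime T A x := by
  simpa using (lt_hitTime_iff (k := 0)).2 fun i hi hi0 => by omega

lemma hitTime_eq_top_iff : hitTime T A x = ⊤ ↔ ∀ i, 1 ≤ i → T^[i] x ∉ A := by
  rw [hitTime, sInf_eq_top]
  refine ⟨fun h i hi hiA => ENat.natCast_ne_top i (h _ ⟨i, ⟨hi, hiA⟩, rfl⟩), ?_⟩
  rintro h _ ⟨i, ⟨hi, hiA⟩, rfl⟩
  exact absurd hiA (h i hi)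

lemma succ_lt_hitTime_iff {k : ℕ} :
    ((k + 1 : ℕ) : ℕ∞) < hitTime T A x ↔ T x ∉ A ∧ (k : ℕ∞) < hitTime T A (T x) := by
  simp only [lt_hitTime_iff, ← Function.iterate_succ_apply]
  refine ⟨fun h => ⟨fun hx => h 1 le_rfl (by omega) hx,
    fun i hi hik => h (i + 1) (by omega) (by omega)⟩, fun ⟨h0, h⟩ i hi hik => ?_⟩
  obtain ⟨j, rfl⟩ : ∃ j, i = j + 1 := ⟨i - 1, by omega⟩
  rcases j.eq_zero_or_pos with rfl | hj
  · exact h0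
  · exact h j hj (by omega)

lemma setOf_lt_mul_toNat_hitTime {a t : ℝ} (ha : 0 < a) (ht : 0 ≤ t) :
    {x | t < a * ((hitTime T A x).toNat : ℝ)} =
      {x | (⌊t / a⌋₊ : ℕ∞) < hitTime T A x} \ {x | hitTime T A x = ⊤} := by
  ext x
  simp only [Set.mem_ofPred_eq, Set.mem_sdiff]
  induction hitTime T A x using ENat.recTopCoe with
  | top => simp [ht.not_gt]
  | coe m => simp [Nat.floor_lt (div_nonneg ht ha.le), div_lt_iff₀ ha, mul_comm]

variable [MeasurableSpace X]

lemma measurableSet_lt_hitTime (hT : Measurable T) (hA : MeasurableSet A) (k : ℕ) :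
    MeasurableSet {x | (k : ℕ∞) < hitTime T A x} := by
  simp only [lt_hitTime_iff, Set.ofPred_forall]
  exact .iInter fun i => .iInter fun _ => .iInter fun _ => hT.iterate i hA.compl

lemma measure_lt_hitTime_eq_add {μ : Measure X} (hT : MeasurePreserving T μ μ)
    (hA : MeasurableSet A) (k : ℕ) :
    μ {x | (k : ℕ∞) < hitTime T A x} =
      μ {x | ((k + 1 : ℕ) : ℕ∞) < hitTime T A x} + μ (A ∩ {x | (k : ℕ∞) < hitTime T A x}) := by
  have hS := measurableSet_lt_hitTime hT.measurable hA k
  have hsplit : T ⁻¹' {x | (k : ℕ∞) < hitTime T A x} =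
      {x | ((k + 1 : ℕ) : ℕ∞) < hitTime T A x} ∪ T ⁻¹' (A ∩ {x | (k : ℕ∞) < hitTime T A x}) := by
    ext x
    simp only [Set.mem_preimage, Set.mem_union, Set.mem_inter_iff, Set.mem_ofPred_eq,
      succ_lt_hitTime_iff]
    tauto
  have hdisj : Disjoint {x | ((k + 1 : ℕ) : ℕ∞) < hitTime T A x}
      (T ⁻¹' (A ∩ {x | (k : ℕ∞) < hitTime T A x})) :=
    Set.disjoint_left.2 fun x hx hx' => (succ_lt_hitTime_iff.1 hx).1 hx'.1
  rw [← hT.measure_preimage hS.nullMeasurableSet, hsplit,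
    measure_union hdisj (hT.measurable (hA.inter hS)),
    hT.measure_preimage (hA.inter hS).nullMeasurableSet]

lemma toReal_measure_lt_hitTime_sub_succ {μ : Measure X} [IsFiniteMeasure μ]
    (hT : MeasurePreserving T μ μ) (hA : MeasurableSet A) (k : ℕ) :
    (μ {x | (k : ℕ∞) < hitTime T A x}).toReal -
        (μ {x | ((k + 1 : ℕ) : ℕ∞) < hitTime T A x}).toReal =
      (μ A).toReal * (ProbabilityTheory.cond μ A {x | (k : ℕ∞) < hitTime T A x}).toReal := by
  rw [measure_lt_hitTime_eq_add hT hA k, ← ProbabilityTheory.cond_mul_eq_inter hA,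
    ENNReal.toReal_add (measure_ne_top _ _) (by finiteness), ENNReal.toReal_mul]
  ring

lemma measure_hitTime_eq_top {μ : Measure X} [IsFiniteMeasure μ] (hE : Ergodic T μ)
    (hA : MeasurableSet A) (hA0 : μ A ≠ 0) : μ {x | hitTime T A x = ⊤} = 0 := by
  have hN : MeasurableSet {x | hitTime T A x = ⊤} := by
    simp only [hitTime_eq_top_iff, Set.ofPred_forall]
    exact .iInter fun i => .iInter fun _ => hE.measurable.iterate i hA.compl
  have hinv : {x | hitTime T A x = ⊤} ⊆ T ⁻¹' {x | hitTime T A x = ⊤} := fun x hx => by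
    simp only [Set.mem_preimage, Set.mem_ofPred_eq, hitTime_eq_top_iff,
      ← Function.iterate_succ_apply] at hx ⊢
    exact fun i hi => hx (i + 1) (by omega)
  rcases hE.ae_empty_or_univ_of_ae_le_preimage hN.nullMeasurableSet hinv.eventuallyLE with h | h
  · simpa using measure_congr h
  · have hret := hE.toMeasurePreserving.conservative.measure_mem_forall_ge_image_notMem_eq_zero
      hA.nullMeasurableSet 1
    have : μ (A ∩ {x | hitTime T A x = ⊤}) = μ A := by
      simpa using measure_congr ((EventuallyEq.refl _ A).inter h)
    refine absurd ?_ hA0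
    rw [← this, ← hret]
    congr 1
    ext x
    simp [hitTime_eq_top_iff]

lemma measure_lt_mul_toNat_hitTime {ν : Measure X} (hν : ν {x | hitTime T A x = ⊤} = 0)
    {a t : ℝ} (ha : 0 < a) (ht : 0 ≤ t) :
    ν {x | t < a * ((hitTime T A x).toNat : ℝ)} = ν {x | (⌊t / a⌋₊ : ℕ∞) < hitTime T A x} := by
  rw [setOf_lt_mul_toNat_hitTime ha ht, measure_sdiff_null hν]

end HitTime

theorem return_time_exponential_iff_hitting_time_exponential {X : Type*} [MeasurableSpace X]
    (μ : Measure X) [IsProbabilityMeasure μ] (T : X → X) (hE : Ergodic T μ)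
    (A : ℕ → Set X) (hA : ∀ n, MeasurableSet (A n)) (hpos : ∀ n, 0 < μ (A n))
    (hshr : Tendsto (fun n => (μ (A n)).toReal) atTop (nhds 0)) :
    (∀ t : ℝ, 0 < t →
        Tendsto (fun n =>
          ((ProbabilityTheory.cond μ (A n))
            {x | t < (μ (A n)).toReal * ((hitTime T (A n) x).toNat : ℝ)}).toReal)
          atTop (nhds (Real.exp (-t)))) ↔
      (∀ t : ℝ, 0 < t →
        Tendsto (fun n =>
          (μ {x | t < (μ (A n)).toReal * ((hitTime T (A n) x).toNat : ℝ)}).toReal)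
          atTop (nhds (Real.exp (-t)))) := by
  have ha n : 0 < (μ (A n)).toReal := ENNReal.toReal_pos (hpos n).ne' (measure_ne_top μ _)
  have hnull n : μ {x | hitTime T (A n) x = ⊤} = 0 :=
    measure_hitTime_eq_top hE (hA n) (hpos n).ne'
  have hsandwich := TailSandwich.of_natFloor
    (φ := fun n k => (μ {x | (k : ℕ∞) < hitTime T (A n) x}).toReal)
    (ψ := fun n k => (ProbabilityTheory.cond μ (A n) {x | (k : ℕ∞) < hitTime T (A n) x}).toReal)
    ha hshr
    (fun n k l hkl => ENNReal.toReal_mono (measure_ne_top _ _)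
      (measure_mono fun _ hx => (Nat.cast_le.2 hkl).trans_lt (α := ℕ∞) hx))
    (fun n => toReal_measure_lt_hitTime_sub_succ hE.toMeasurePreserving (hA n))
  refine (forall₂_congr fun t ht => tendsto_congr fun n => ?_).trans
    ((hsandwich.tendsto_exp_iff (fun n => ?_) fun _ _ => ENNReal.toReal_nonneg).trans
      (forall₂_congr fun t ht => tendsto_congr fun n => ?_))
  · rw [measure_lt_mul_toNat_hitTime (ProbabilityTheory.cond_absolutelyContinuous (hnull n))
      (ha n) ht.le]
  · simp [hitTime_pos]
  · rw [measure_lt_mul_toNat_hitTime (hnull n) (ha n) ht.le]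
end

section
/- In a ψ-mixing system, for any m, k ∈ ℕ, the sweep-out sequence satisfies the almost-subadditivity log s_A(m + k + n_A) ≤ log s_A(m) + log s_A(k) + log(1 + ψ_1), where n_A is the least integer with A ∈ B_{n_A}. -/
/-! The event "no visit to `A` before time `m + k + nA`" is contained in the event "no visit
before time `m`" intersected with the `T^[m + nA]`-preimage of "no visit before time `k`". The
first event is `𝔅 (m + nA)`-measurable, so ψ-mixing with gap `0` bounds the measure of the
intersection by `(1 + ψ 0) s_A(m) s_A(k)`, and `ψ 0 ≤ ψ 1`. -/

open MeasureTheory Filter Topology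

namespace Sweep

variable {X : Type*} {T : X → X} {A : Set X}

def avoidSet (T : X → X) (A : Set X) (k : ℕ) : Set X :=
  ⋂ i ∈ Finset.range k, T^[i] ⁻¹' Aᶜ

theorem sweep_eq_measure_avoidSet [MeasurableSpace X] (μ : Measure X) (k : ℕ) :
    sweep μ T A k = (μ (avoidSet T A k)).toReal :=
  rfl

theorem avoidSet_add_add_subset (a g b : ℕ) :
    avoidSet T A (a + g + b) ⊆ avoidSet T A a ∩ T^[a + g] ⁻¹' avoidSet T A b := by
  intro x hx
  simp only [avoidSet, Set.mem_iInter, Set.mem_inter_iff, Set.mem_preimage,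
    Finset.mem_range] at hx ⊢
  refine ⟨fun i hi => hx i (by omega), fun i hi => ?_⟩
  rw [← Function.iterate_add_apply]
  exact hx (i + (a + g)) (by omega)

theorem measurableSet_preimage_iterate {𝔅 : ℕ → MeasurableSpace X}
    (h𝔅T : ∀ n (S : Set X), MeasurableSet[𝔅 n] S → MeasurableSet[𝔅 (n + 1)] (T ⁻¹' S))
    {n : ℕ} {S : Set X} (hS : MeasurableSet[𝔅 n] S) (i : ℕ) :
    MeasurableSet[𝔅 (n + i)] (T^[i] ⁻¹' S) := by
  induction i with
  | zero => simpa using hS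
  | succ i ih =>
    rw [Function.iterate_succ, Set.preimage_comp]
    exact h𝔅T _ _ ih

theorem measurableSet_avoidSet {𝔅 : ℕ → MeasurableSpace X} (h𝔅mono : Monotone 𝔅)
    (h𝔅T : ∀ n (S : Set X), MeasurableSet[𝔅 n] S → MeasurableSet[𝔅 (n + 1)] (T ⁻¹' S))
    {nA : ℕ} (hnA : MeasurableSet[𝔅 nA] A) (k : ℕ) :
    MeasurableSet[𝔅 (k + nA)] (avoidSet T A k) := by
  refine MeasurableSet.biInter (Set.to_countable _) fun i hi => ?_
  have hle : nA + i ≤ k + nA := by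
    have := Finset.mem_range.mp hi
    omega
  exact h𝔅mono hle _ (measurableSet_preimage_iterate h𝔅T hnA.compl i)

theorem measure_inter_preimage_iterate_le [MeasurableSpace X] {μ : Measure X}
    {𝔅 : ℕ → MeasurableSpace X} {ψ : ℕ → ℝ}
    (hmix : ∀ (n m k : ℕ) (S B : Set X), MeasurableSet[𝔅 n] S → MeasurableSet[𝔅 m] B →
      |(μ (S ∩ T^[k + n] ⁻¹' B)).toReal - (μ S).toReal * (μ B).toReal| ≤
        ψ k * (μ S).toReal * (μ B).toReal)
    {n m : ℕ} {S B : Set X} (hS : MeasurableSet[𝔅 n] S) (hB : MeasurableSet[𝔅 m] B) :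
    (μ (S ∩ T^[n] ⁻¹' B)).toReal ≤ (1 + ψ 0) * ((μ S).toReal * (μ B).toReal) := by
  have h := (abs_le.mp (hmix n m 0 S B hS hB)).2
  rw [zero_add] at h
  linarith

theorem sweep_add_add_le [MeasurableSpace X] {μ : Measure X} [IsFiniteMeasure μ]
    {𝔅 : ℕ → MeasurableSpace X} (h𝔅mono : Monotone 𝔅)
    (h𝔅T : ∀ n (S : Set X), MeasurableSet[𝔅 n] S → MeasurableSet[𝔅 (n + 1)] (T ⁻¹' S))
    {ψ : ℕ → ℝ}
    (hmix : ∀ (n m k : ℕ) (S B : Set X), MeasurableSet[𝔅 n] S → MeasurableSet[𝔅 m] B →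
      |(μ (S ∩ T^[k + n] ⁻¹' B)).toReal - (μ S).toReal * (μ B).toReal| ≤
        ψ k * (μ S).toReal * (μ B).toReal)
    {nA : ℕ} (hnA : MeasurableSet[𝔅 nA] A) (m k : ℕ) :
    sweep μ T A (m + k + nA) ≤ (1 + ψ 0) * (sweep μ T A m * sweep μ T A k) := by
  simp only [sweep_eq_measure_avoidSet]
  calc (μ (avoidSet T A (m + k + nA))).toReal
      ≤ (μ (avoidSet T A m ∩ T^[m + nA] ⁻¹' avoidSet T A k)).toReal := by
        refine ENNReal.toReal_mono (measure_ne_top μ _) (measure_mono ?_)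
        rw [add_right_comm]
        exact avoidSet_add_add_subset m nA k
    _ ≤ _ := measure_inter_preimage_iterate_le hmix
        (measurableSet_avoidSet h𝔅mono h𝔅T hnA m) (measurableSet_avoidSet h𝔅mono h𝔅T hnA k)

end Sweep

open Sweep in
theorem sweep_almost_subadditive_general
    {X : Type*} [m0 : MeasurableSpace X] (μ : Measure X) [IsProbabilityMeasure μ]
    (T : X → X)
    (𝔅 : ℕ → MeasurableSpace X) (h𝔅mono : Monotone 𝔅)
    (h𝔅T : ∀ n (S : Set X), MeasurableSet[𝔅 n] S → MeasurableSet[𝔅 (n + 1)] (T ⁻¹' S))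
    (ψ : ℕ → ℝ) (hψnonneg : ∀ n, 0 ≤ ψ n)
    (hψ1 : ∀ n, ψ n ≤ ψ 1)
    (hmix : ∀ (n m k : ℕ) (S B : Set X), MeasurableSet[𝔅 n] S → MeasurableSet[𝔅 m] B →
      |(μ (S ∩ T^[k + n] ⁻¹' B)).toReal - (μ S).toReal * (μ B).toReal| ≤
        ψ k * (μ S).toReal * (μ B).toReal)
    (A : Set X) (nA : ℕ) (hnA : MeasurableSet[𝔅 nA] A)
    (hs : ∀ k : ℕ, 0 < sweep μ T A k) (m k : ℕ) :
    Real.log (sweep μ T A (m + k + nA)) ≤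
      Real.log (sweep μ T A m) + Real.log (sweep μ T A k) + Real.log (1 + ψ 1) := by
  have hψ : 0 < 1 + ψ 1 := by linarith [hψnonneg 1]
  have hbound : sweep μ T A (m + k + nA) ≤ (1 + ψ 1) * (sweep μ T A m * sweep μ T A k) :=
    (sweep_add_add_le h𝔅mono h𝔅T hmix hnA m k).trans <| by
      gcongr
      · exact (mul_pos (hs m) (hs k)).le
      · exact hψ1 0
  calc Real.log (sweep μ T A (m + k + nA))
      ≤ Real.log ((1 + ψ 1) * (sweep μ T A m * sweep μ T A k)) :=
        Real.log_le_log (hs _) hbound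
    _ = Real.log (sweep μ T A m) + Real.log (sweep μ T A k) + Real.log (1 + ψ 1) := by
        rw [Real.log_mul hψ.ne' (mul_pos (hs m) (hs k)).ne',
          Real.log_mul (hs m).ne' (hs k).ne']
        ring

theorem sweep_almost_subadditive
    {X : Type*} [m0 : MeasurableSpace X] (μ : Measure X) [IsProbabilityMeasure μ]
    (T : X → X) (hE : Ergodic T μ)
    (𝔅 : ℕ → MeasurableSpace X) (h𝔅le : ∀ n, 𝔅 n ≤ m0) (h𝔅mono : Monotone 𝔅)
    (h𝔅T : ∀ n (S : Set X), MeasurableSet[𝔅 n] S → MeasurableSet[𝔅 (n + 1)] (T ⁻¹' S))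
    (ψ : ℕ → ℝ) (hψnonneg : ∀ n, 0 ≤ ψ n) (hψ0 : Tendsto ψ atTop (nhds 0))
    (hψ1 : ∀ n, ψ n ≤ ψ 1)
    (hmix : ∀ (n m k : ℕ) (S B : Set X), MeasurableSet[𝔅 n] S → MeasurableSet[𝔅 m] B →
      |(μ (S ∩ T^[k + n] ⁻¹' B)).toReal - (μ S).toReal * (μ B).toReal| ≤
        ψ k * (μ S).toReal * (μ B).toReal)
    (A : Set X) (hpos : 0 < μ A) (nA : ℕ) (hnA : MeasurableSet[𝔅 nA] A)
    (hnAmin : ∀ m, MeasurableSet[𝔅 m] A → nA ≤ m)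
    (hs : ∀ k : ℕ, 0 < sweep μ T A k) (m k : ℕ) :
    Real.log (sweep μ T A (m + k + nA)) ≤
      Real.log (sweep μ T A m) + Real.log (sweep μ T A k) + Real.log (1 + ψ 1) :=
  sweep_almost_subadditive_general (m0 := m0) μ T 𝔅 h𝔅mono h𝔅T ψ hψnonneg hψ1 hmix A nA hnA hs m k
end

section
/- Let f ∈ L^1(X, μ) with 0 ≤ f ≤ 1 and ‖f‖_1 > 0, and define τ_f(x) = inf{k ≥ 1 : f(Tx) + ... + f(T^k x) ≥ 1}, A_f = supp f, and s_f(k) = μ(τ_f > k). Then for every k ≥ 0, μ_{A_f}(τ_f > k) = (1/μ(A_f))·(s_f(k) - s_f(k+1)) + μ_{T^{-1}A_f}(τ_f > k+1). -/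
/-! For `A = supp f` and `f (T x) = 0`, the first step of the orbit of `x` adds nothing to the
partial sums, so `τ_f x > k + 1 ↔ τ_f (T x) > k`. Hence
`{τ_f > k + 1} \ T⁻¹A = T⁻¹({τ_f > k} \ A)`, and invariance of `μ` turns this into
`μ(A ∩ {τ_f > k}) = s_f(k) - s_f(k + 1) + μ(T⁻¹A ∩ {τ_f > k + 1})`; divide by `μ(A) = μ(T⁻¹A)`. -/

open MeasureTheory Filter Topology

/-- Generalized hitting time `τ_f(x) = inf {k ≥ 1 : f(Tx) + ⋯ + f(T^k x) ≥ 1}`. -/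
noncomputable def hitTimeF {X : Type*} (T : X → X) (f : X → ℝ) (x : X) : ℕ∞ :=
  sInf ((↑) '' {k : ℕ | 1 ≤ k ∧ 1 ≤ ∑ j ∈ Finset.Icc 1 k, f (T^[j] x)})

/-- `s_f(k) = μ(τ_f > k)`. -/
noncomputable def sweepF {X : Type*} [MeasurableSpace X] (μ : Measure X) (T : X → X)
    (f : X → ℝ) (k : ℕ) : ℝ :=
  (μ {x | (k : ℕ∞) < hitTimeF T f x}).toReal

open Finset in
theorem sum_Icc_iterate_eq_birkhoffSum {X M : Type*} [AddCommMonoid M] (T : X → X) (f : X → M)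
    (n : ℕ) (x : X) : ∑ j ∈ Icc 1 n, f (T^[j] x) = birkhoffSum T f n (T x) := by
  simp only [birkhoffSum, ← Function.iterate_succ_apply]
  rw [range_eq_Ico, sum_Ico_add' (fun j => f (T^[j] x)) 0 n 1, zero_add,
    Ico_add_one_right_eq_Icc]

section HitTime

variable {X : Type*} (T : X → X) (f : X → ℝ)

theorem lt_hitTimeF_iff (m : ℕ) (x : X) :
    (m : ℕ∞) < hitTimeF T f x ↔ ∀ n, 1 ≤ n → n ≤ m → birkhoffSum T f n (T x) < 1 := by
  rw [← ENat.add_one_le_iff (ENat.natCast_ne_top m), hitTimeF, le_sInf_iff]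
  simp only [Set.forall_mem_image, Set.mem_ofPred_eq, and_imp, sum_Icc_iterate_eq_birkhoffSum]
  refine forall_congr' fun n => forall_congr' fun _ => ?_
  norm_cast
  rw [Nat.add_one_le_iff]
  simp only [← not_le]
  exact imp_not_comm

theorem lt_hitTimeF_succ_iff_of_apply_eq_zero {x : X} (hx : f (T x) = 0) (k : ℕ) :
    ((k + 1 : ℕ) : ℕ∞) < hitTimeF T f x ↔ (k : ℕ∞) < hitTimeF T f (T x) := by
  simp only [lt_hitTimeF_iff]
  have shift : ∀ n, birkhoffSum T f (n + 1) (T x) = birkhoffSum T f n (T (T x)) := fun n => by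
    rw [birkhoffSum_succ', hx, zero_add]
  constructor
  · intro h n hn hnk
    simpa only [shift] using h (n + 1) (by omega) (by omega)
  · rintro h (_ | n) hn hnk
    · omega
    rw [shift]
    rcases n.eq_zero_or_pos with rfl | hn'
    · simp [birkhoffSum_zero]
    · exact h n hn' (by omega)

theorem setOf_lt_hitTimeF_succ_diff_preimage_support (k : ℕ) :
    {x | ((k + 1 : ℕ) : ℕ∞) < hitTimeF T f x} \ T ⁻¹' Function.support f =
      T ⁻¹' ({x | (k : ℕ∞) < hitTimeF T f x} \ Function.support f) := by
  ext x
  simp only [Set.mem_sdiff, Set.mem_ofPred_eq, Set.mem_preimage, Function.mem_support, not_not]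
  exact ⟨fun ⟨h, hx⟩ => ⟨(lt_hitTimeF_succ_iff_of_apply_eq_zero T f hx k).1 h, hx⟩,
    fun ⟨h, hx⟩ => ⟨(lt_hitTimeF_succ_iff_of_apply_eq_zero T f hx k).2 h, hx⟩⟩

end HitTime

theorem measurableSet_lt_hitTimeF {X : Type*} [MeasurableSpace X] {T : X → X} {f : X → ℝ}
    (hT : Measurable T) (hf : Measurable f) (m : ℕ) :
    MeasurableSet {x | (m : ℕ∞) < hitTimeF T f x} := by
  have hsum (n : ℕ) : Measurable fun x => birkhoffSum T f n (T x) :=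
    Finset.measurable_sum _ fun j _ => hf.comp ((hT.iterate j).comp hT)
  simp only [lt_hitTimeF_iff, Set.ofPred_forall]
  exact .iInter fun n => .iInter fun _ => .iInter fun _ =>
    measurableSet_lt (hsum n) measurable_const

theorem MeasureTheory.MeasurePreserving.measureReal_inter_eq_sub_add {X : Type*}
    [MeasurableSpace X] {μ : Measure X} [IsFiniteMeasure μ] {T : X → X}
    (hT : MeasurePreserving T μ μ) {A S S' : Set X} (hA : MeasurableSet A)
    (hS : MeasurableSet S) (h : S' \ T ⁻¹' A = T ⁻¹' (S \ A)) :
    μ.real (A ∩ S) = μ.real S - μ.real S' + μ.real (T ⁻¹' A ∩ S') := by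
  have hS_split := measureReal_inter_add_sdiff (μ := μ) (s := S) hA
  have hS'_split := measureReal_inter_add_sdiff (μ := μ) (s := S') (hT.measurable hA)
  have hdiff : μ.real (S' \ T ⁻¹' A) = μ.real (S \ A) := by
    rw [h, hT.measureReal_preimage (hS.diff hA).nullMeasurableSet]
  rw [Set.inter_comm] at hS_split hS'_split
  linarith

theorem generalized_return_identity_general {X : Type*} [MeasurableSpace X] (μ : Measure X)
    [IsProbabilityMeasure μ] (T : X → X) (hE : Ergodic T μ)
    (f : X → ℝ) (hfm : Measurable f) (k : ℕ) :
    ((ProbabilityTheory.cond μ (Function.support f))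
        {x | (k : ℕ∞) < hitTimeF T f x}).toReal =
      (1 / (μ (Function.support f)).toReal) * (sweepF μ T f k - sweepF μ T f (k + 1)) +
        ((ProbabilityTheory.cond μ (T ⁻¹' Function.support f))
          {x | ((k + 1 : ℕ) : ℕ∞) < hitTimeF T f x}).toReal := by
  have hT : MeasurePreserving T μ μ := hE.toMeasurePreserving
  have hA : MeasurableSet (Function.support f) := measurableSet_support hfm
  rw [ProbabilityTheory.cond_apply hA, ProbabilityTheory.cond_apply (hT.measurable hA),
    ENNReal.toReal_mul, ENNReal.toReal_mul, ENNReal.toReal_inv, ENNReal.toReal_inv,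
    hT.measure_preimage hA.nullMeasurableSet, ← measureReal_def, ← measureReal_def,
    hT.measureReal_inter_eq_sub_add hA (measurableSet_lt_hitTimeF hT.measurable hfm k)
      (setOf_lt_hitTimeF_succ_diff_preimage_support T f k)]
  simp only [sweepF, measureReal_def]
  ring

theorem generalized_return_identity {X : Type*} [MeasurableSpace X] (μ : Measure X)
    [IsProbabilityMeasure μ] (T : X → X) (hE : Ergodic T μ)
    (f : X → ℝ) (hfm : Measurable f) (hfi : Integrable f μ)
    (hf0 : ∀ x, 0 ≤ f x) (hf1 : ∀ x, f x ≤ 1) (hfpos : 0 < ∫ x, f x ∂μ) (k : ℕ) :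
    ((ProbabilityTheory.cond μ (Function.support f))
        {x | (k : ℕ∞) < hitTimeF T f x}).toReal =
      (1 / (μ (Function.support f)).toReal) * (sweepF μ T f k - sweepF μ T f (k + 1)) +
        ((ProbabilityTheory.cond μ (T ⁻¹' Function.support f))
          {x | ((k + 1 : ℕ) : ℕ∞) < hitTimeF T f x}).toReal :=
  generalized_return_identity_general μ T hE f hfm k
end
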